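/- arXiv:1607.04578 — 10 statements merged into one kernel-verified Lean document; each statement's English description precedes it below -/
import Mathlib

section
/- Let m ≥ 2 and d ≥ 2 be integers and define g(x) = cot(π(x + 1/(2m))/d). Then for all real x, y with 0 ≤ x < y < d - 1/(2m), one has (1 + 2m·x)·g(x) > (1 + 2m·y)·g(y). -/
/-!
The substitution `t = π (x + 1/(2m)) / d` turns `1 + 2 m x` into `(2 m d / π) t` and maps
`[0, d - 1/(2m))` into `(0, π)`, so the claim is that `t cot t` is strictly decreasing on
`(0, π)`.
Its derivative is `(sin t cos t - t) / sin² t`, negative because `sin 2t < 2t`.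
-/

open Real Set

lemma Real.hasDerivAt_cot {t : ℝ} (ht : sin t ≠ 0) : HasDerivAt cot (-1 / sin t ^ 2) t := by
  rw [show cot = fun u => cos u / sin u from funext cot_eq_cos_div_sin]
  refine ((hasDerivAt_cos t).div (hasDerivAt_sin t) ht).congr_deriv ?_
  field_simp
  linear_combination -sin_sq_add_cos_sq t

lemma hasDerivAt_mul_cot {t : ℝ} (ht : sin t ≠ 0) :
    HasDerivAt (fun u => u * cot u) ((sin t * cos t - t) / sin t ^ 2) t := by
  refine ((hasDerivAt_id' t).mul (hasDerivAt_cot ht)).congr_deriv ?_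
  rw [cot_eq_cos_div_sin]
  field_simp
  ring

lemma sin_mul_cos_lt_self {t : ℝ} (ht : 0 < t) : sin t * cos t < t := by
  have h := sin_lt (by linarith : (0 : ℝ) < 2 * t)
  rw [sin_two_mul] at h
  linarith

lemma strictAntiOn_mul_cot : StrictAntiOn (fun t => t * cot t) (Ioo 0 π) := by
  have hsin : ∀ t ∈ Ioo 0 π, sin t ≠ 0 := fun t ht => (sin_pos_of_pos_of_lt_pi ht.1 ht.2).ne'
  refine strictAntiOn_of_hasDerivWithinAt_neg (f' := fun t => (sin t * cos t - t) / sin t ^ 2)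
    (convex_Ioo 0 π)
    (fun t ht => (hasDerivAt_mul_cot (hsin t ht)).continuousAt.continuousWithinAt)
    (fun t ht => ?_) (fun t ht => ?_)
  · rw [interior_Ioo] at ht
    exact (hasDerivAt_mul_cot (hsin t ht)).hasDerivWithinAt
  · rw [interior_Ioo] at ht
    exact div_neg_of_neg_of_pos (sub_neg.mpr (sin_mul_cos_lt_self ht.1))
      (pow_pos (sin_pos_of_pos_of_lt_pi ht.1 ht.2) 2)

lemma pi_mul_div_mem_Ioo {s d : ℝ} (hs : 0 < s) (hsd : s < d) : π * s / d ∈ Ioo 0 π := by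
  have hd : 0 < d := hs.trans hsd
  refine ⟨by positivity, ?_⟩
  rw [div_lt_iff₀ hd]
  exact mul_lt_mul_of_pos_left hsd pi_pos

theorem g_lemma (m d : ℤ) (hm : 2 ≤ m) (hd : 2 ≤ d) (x y : ℝ)
    (hx : 0 ≤ x) (hxy : x < y) (hy : y < (d : ℝ) - 1 / (2 * (m : ℝ))) :
    (1 + 2 * (m : ℝ) * x) * Real.cot (π * (x + 1 / (2 * (m : ℝ))) / (d : ℝ)) >
      (1 + 2 * (m : ℝ) * y) * Real.cot (π * (y + 1 / (2 * (m : ℝ))) / (d : ℝ)) := by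
  have hm0 : (0 : ℝ) < m := by exact_mod_cast (by omega : (0 : ℤ) < m)
  have hd0 : (0 : ℝ) < d := by exact_mod_cast (by omega : (0 : ℤ) < d)
  have hc : 0 < 1 / (2 * (m : ℝ)) := by positivity
  have hscale : ∀ z : ℝ, (1 + 2 * (m : ℝ) * z) * cot (π * (z + 1 / (2 * (m : ℝ))) / d) =
      2 * m * d / π *
        (π * (z + 1 / (2 * (m : ℝ))) / d * cot (π * (z + 1 / (2 * (m : ℝ))) / d)) := by
    intro z
    rw [← mul_assoc]
    congr 1
    field_simp
    ring
  have hmono := strictAntiOn_mul_cot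
    (pi_mul_div_mem_Ioo (s := x + 1 / (2 * (m : ℝ))) (by linarith) (by linarith))
    (pi_mul_div_mem_Ioo (s := y + 1 / (2 * (m : ℝ))) (by linarith) (by linarith))
    (div_lt_div_of_pos_right (mul_lt_mul_of_pos_left (add_lt_add_left hxy _) pi_pos) hd0)
  rw [hscale x, hscale y]
  exact mul_lt_mul_of_pos_left hmono (div_pos (mul_pos (mul_pos two_pos hm0) hd0) pi_pos)
end

section
/- Let m ≥ 2 and d ≥ 2 be integers and for an integer k define α̂_k = cot(π(k + 1/(2m))/d). Then for all integers k, l, p with 0 < k < d, 0 < l < d, and 0 ≤ p < d, one has α̂_0 + α̂_p > α̂_k + α̂_l. -/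
/-!
Write `θ j = π (j + ε) / d` with `ε = 1 / (2m) ≤ 1/4`. Since `cot` decreases on `(0, π)`, it
suffices to treat `k = l = 1` and `p = d - 1`, i.e. to show `2 cot c < cot a - cot b` with
`a = θ 0`, `b = π - θ (d - 1) = π (1 - ε) / d < π / 2` and `c = θ 1 > b`. Here `cot c < cot b`,
and `b ≥ 3a` because `ε ≤ 1/4`, so `3 cot b ≤ 3 cot (3a) ≤ cot a` by superadditivity of `tan`
on `[0, π / 2)`.
-/

open Real Set

namespace Real

lemma cot_pi_sub (x : ℝ) : cot (π - x) = -cot x := by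
  rw [cot_eq_cos_div_sin, cot_eq_cos_div_sin, cos_pi_sub, sin_pi_sub, neg_div]

lemma strictAntiOn_cot : StrictAntiOn cot (Ioo 0 π) := by
  rintro x ⟨hx, -⟩ y ⟨-, hy⟩ hxy
  have hsx : 0 < sin x := sin_pos_of_pos_of_lt_pi hx (hxy.trans hy)
  have hsy : 0 < sin y := sin_pos_of_pos_of_lt_pi (hx.trans hxy) hy
  have hsub : 0 < sin (y - x) := sin_pos_of_pos_of_lt_pi (by linarith) (by linarith)
  rw [cot_eq_cos_div_sin, cot_eq_cos_div_sin, div_lt_div_iff₀ hsy hsx]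
  rw [sin_sub] at hsub
  linarith

-- `cos (x + y) ≤ cos x * cos y` on this range, while the sum has numerator `sin (x + y)`.
lemma tan_add_tan_le_tan_add {x y : ℝ} (hx : 0 ≤ x) (hy : 0 ≤ y) (hxy : x + y < π / 2) :
    tan x + tan y ≤ tan (x + y) := by
  have hcx : 0 < cos x := cos_pos_of_mem_Ioo ⟨by linarith, by linarith⟩
  have hcy : 0 < cos y := cos_pos_of_mem_Ioo ⟨by linarith, by linarith⟩
  have hcxy : 0 < cos (x + y) := cos_pos_of_mem_Ioo ⟨by linarith, hxy⟩
  have hsxy : 0 ≤ sin (x + y) := sin_nonneg_of_nonneg_of_le_pi (by linarith) (by linarith)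
  have hsum : tan x + tan y = sin (x + y) / (cos x * cos y) := by
    rw [tan_eq_sin_div_cos, tan_eq_sin_div_cos, sin_add]
    field_simp
  rw [hsum, tan_eq_sin_div_cos]
  apply div_le_div_of_nonneg_left hsxy hcxy
  rw [cos_add]
  nlinarith [sin_nonneg_of_nonneg_of_le_pi hx (by linarith : x ≤ π),
    sin_nonneg_of_nonneg_of_le_pi hy (by linarith : y ≤ π)]

lemma nat_mul_tan_le_tan_nat_mul {x : ℝ} (hx : 0 ≤ x) :
    ∀ n : ℕ, n * x < π / 2 → n * tan x ≤ tan (n * x)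
  | 0, _ => by simp
  | n + 1, h => by
    have hn : (n : ℝ) * x < π / 2 := by push_cast at h; nlinarith
    calc ((n + 1 : ℕ) : ℝ) * tan x = n * tan x + tan x := by push_cast; ring
      _ ≤ tan (n * x) + tan x := by gcongr; exact nat_mul_tan_le_tan_nat_mul hx n hn
      _ ≤ tan (n * x + x) :=
        tan_add_tan_le_tan_add (by positivity) hx (by push_cast at h; linarith)
      _ = tan ((n + 1 : ℕ) * x) := by push_cast; ring_nf

lemma nat_mul_cot_nat_mul_le_cot {x : ℝ} (hx : 0 < x) {n : ℕ} (hn : 0 < n)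
    (hnx : n * x < π / 2) : n * cot (n * x) ≤ cot x := by
  have hn' : (0 : ℝ) < n := by exact_mod_cast hn
  have htan : 0 < tan x := tan_pos_of_pos_of_lt_pi_div_two hx
    (lt_of_le_of_lt (le_mul_of_one_le_left hx.le (by exact_mod_cast hn)) hnx)
  calc n * cot (n * x) = n * (tan (n * x))⁻¹ := by rw [tan_inv_eq_cot]
    _ ≤ n * (n * tan x)⁻¹ := by
      gcongr
      exact nat_mul_tan_le_tan_nat_mul hx.le n hnx
    _ = cot x := by rw [mul_inv, ← mul_assoc, mul_inv_cancel₀ hn'.ne', one_mul, tan_inv_eq_cot]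

end Real

lemma two_mul_cot_lt_cot_sub_cot {a b c : ℝ} (ha : 0 < a) (hab : 3 * a ≤ b) (hb : b < π / 2)
    (hbc : b < c) (hc : c < π) : 2 * cot c < cot a - cot b := by
  have h3a : (0 : ℝ) < 3 * a := by positivity
  have hcb : cot c < cot b :=
    strictAntiOn_cot ⟨h3a.trans_le hab, by linarith⟩ ⟨by linarith, hc⟩ hbc
  have hb3a : cot b ≤ cot (3 * a) :=
    strictAntiOn_cot.antitoneOn ⟨h3a, by linarith⟩ ⟨h3a.trans_le hab, by linarith⟩ hab
  have h3 := nat_mul_cot_nat_mul_le_cot ha (n := 3) (by norm_num) (by push_cast; linarith)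
  push_cast at h3
  linarith

lemma cot_add_cot_lt_cot_add_cot {ε D x y z : ℝ} (hε : 0 < ε) (hε' : ε ≤ 1 / 4)
    (hx : 1 ≤ x) (hx' : x ≤ D - 1) (hy : 1 ≤ y) (hy' : y ≤ D - 1)
    (hz : 0 ≤ z) (hz' : z ≤ D - 1) :
    cot (π * (x + ε) / D) + cot (π * (y + ε) / D) <
      cot (π * (0 + ε) / D) + cot (π * (z + ε) / D) := by
  have hD : 0 < D := by linarith
  have hangle : ∀ u, 0 ≤ u → u ≤ D - 1 → π * (u + ε) / D ∈ Ioo 0 π := fun u hu hu' =>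
    ⟨by positivity, by rw [div_lt_iff₀ hD]; nlinarith [pi_pos]⟩
  have hanti : ∀ u v, 0 ≤ u → u ≤ v → v ≤ D - 1 →
      cot (π * (v + ε) / D) ≤ cot (π * (u + ε) / D) := fun u v hu huv hv =>
    strictAntiOn_cot.antitoneOn (hangle u hu (huv.trans hv)) (hangle v (hu.trans huv) hv)
      (by gcongr)
  have hlast : cot (π * (D - 1 + ε) / D) = -cot (π * (1 - ε) / D) := by
    rw [← cot_pi_sub]; congr 1; field_simp; ring
  have hkey : 2 * cot (π * (1 + ε) / D) < cot (π * (0 + ε) / D) - cot (π * (1 - ε) / D) := by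
    apply two_mul_cot_lt_cot_sub_cot
    · positivity
    · rw [← mul_div_assoc, div_le_div_iff_of_pos_right hD]; nlinarith [pi_pos]
    · rw [div_lt_iff₀ hD]; nlinarith [pi_pos]
    · gcongr; linarith
    · rw [div_lt_iff₀ hD]; nlinarith [pi_pos]
  linarith [hanti 1 x zero_le_one hx hx', hanti 1 y zero_le_one hy hy',
    hanti z (D - 1) hz hz' le_rfl]

theorem alpha_lemma_general (m d : ℤ) (hm : 2 ≤ m) (k l p : ℤ)
    (hk : 0 < k) (hk' : k < d) (hl : 0 < l) (hl' : l < d) (hp : 0 ≤ p) (hp' : p < d) :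
    Real.cot (π * ((0 : ℝ) + 1 / (2 * (m : ℝ))) / (d : ℝ)) +
      Real.cot (π * ((p : ℝ) + 1 / (2 * (m : ℝ))) / (d : ℝ)) >
    Real.cot (π * ((k : ℝ) + 1 / (2 * (m : ℝ))) / (d : ℝ)) +
      Real.cot (π * ((l : ℝ) + 1 / (2 * (m : ℝ))) / (d : ℝ)) := by
  have hm' : (2 : ℝ) ≤ m := by exact_mod_cast hm
  have hε : 1 / (2 * (m : ℝ)) ≤ 1 / 4 := by
    rw [div_le_div_iff₀ (by positivity) (by norm_num)]; linarith
  have hle : ∀ j : ℤ, j < d → (j : ℝ) ≤ d - 1 := fun j hj => by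
    exact_mod_cast Int.le_sub_one_of_lt hj
  exact cot_add_cot_lt_cot_add_cot (by positivity) hε (by exact_mod_cast hk) (hle k hk')
    (by exact_mod_cast hl) (hle l hl') (by exact_mod_cast hp) (hle p hp')

theorem alpha_lemma (m d : ℤ) (hm : 2 ≤ m) (hd : 2 ≤ d) (k l p : ℤ)
    (hk : 0 < k) (hk' : k < d) (hl : 0 < l) (hl' : l < d) (hp : 0 ≤ p) (hp' : p < d) :
    Real.cot (π * ((0 : ℝ) + 1 / (2 * (m : ℝ))) / (d : ℝ)) +
      Real.cot (π * ((p : ℝ) + 1 / (2 * (m : ℝ))) / (d : ℝ)) >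
    Real.cot (π * ((k : ℝ) + 1 / (2 * (m : ℝ))) / (d : ℝ)) +
      Real.cot (π * ((l : ℝ) + 1 / (2 * (m : ℝ))) / (d : ℝ)) :=
  alpha_lemma_general m d hm k l p hk hk' hl hl' hp hp'
end

section
/- Let m ≥ 2 and d ≥ 2 be integers, and for k an integer modulo d define α̂_k = cot(π(k + 1/(2m))/d) where k is taken as its representative in {0,...,d-1}. Then the maximum over all x ∈ {0,...,d-1} of max over y ∈ {0,...,d-1} of (α̂_y + α̂_{(-1 - x - y) mod d}) equals α̂_0 + α̂_{(d-1-x) mod d}. -/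
/-!
Write `θ k = π (k + c) / d` with `c = 1/(2m) ∈ (0, 1/2)`, so that `α̂_k = cot θ_k` and all `θ_k` lie
in `(0, π)`. The representatives `a = y mod d`, `b = (-1-x-y) mod d` satisfy `a + b = s` or
`a + b = s + d`, where `s = (d-1-x) mod d`. Using
`cot u + cot v = sin (u + v) / (sin u sin v)`:
* if `a + b = s + d`, then `θ_a + θ_b ∈ (π, 2π)` and the sum of cotangents is negative, while
  `cot θ_0 + cot θ_s > 0` since `θ_0 + θ_s < π`;
* if `a + b = s`, the numerator `sin (θ_a + θ_b)` is fixed and positive, and the denominator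
  `sin θ_a sin θ_b = (cos (θ_a - θ_b) - cos (θ_a + θ_b)) / 2` is smallest when `|θ_a - θ_b|` is
  largest, i.e. for `{a, b} = {0, s}`.
-/

open Real

theorem cot_add_cot {u v : ℝ} (hu : sin u ≠ 0) (hv : sin v ≠ 0) :
    cot u + cot v = sin (u + v) / (sin u * sin v) := by
  rw [cot_eq_cos_div_sin, cot_eq_cos_div_sin, sin_add]
  field_simp
  ring

theorem cot_add_cot_pos {u v : ℝ} (hu : 0 < u) (hv : 0 < v) (huv : u + v < π) :
    0 < cot u + cot v := by
  rw [cot_add_cot (sin_pos_of_pos_of_lt_pi hu (by linarith)).ne'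
    (sin_pos_of_pos_of_lt_pi hv (by linarith)).ne']
  exact div_pos (sin_pos_of_pos_of_lt_pi (by linarith) huv)
    (mul_pos (sin_pos_of_pos_of_lt_pi hu (by linarith)) (sin_pos_of_pos_of_lt_pi hv (by linarith)))

theorem cot_add_cot_neg {u v : ℝ} (hu₀ : 0 < u) (hu : u < π) (hv₀ : 0 < v) (hv : v < π)
    (huv : π < u + v) : cot u + cot v < 0 := by
  have hsu := sin_pos_of_pos_of_lt_pi hu₀ hu
  have hsv := sin_pos_of_pos_of_lt_pi hv₀ hv
  have hsuv : sin (u + v) < 0 := by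
    have := sin_pos_of_pos_of_lt_pi (x := u + v - π) (by linarith) (by linarith)
    rw [sin_sub_pi] at this
    linarith
  rw [cot_add_cot hsu.ne' hsv.ne']
  exact div_neg_of_neg_of_pos hsuv (mul_pos hsu hsv)

theorem sin_mul_sin_le_of_add_eq {p q u v : ℝ} (hpu : p ≤ u) (hpv : p ≤ v)
    (huv : u + v = p + q) (hqp : q - p ≤ π) :
    sin p * sin q ≤ sin u * sin v := by
  have product_to_sum : ∀ s t : ℝ, sin s * sin t = (cos (s - t) - cos (s + t)) / 2 := by
    intro s t
    rw [cos_sub, cos_add]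
    ring
  have hcos : cos (q - p) ≤ cos (u - v) := by
    rw [← cos_abs (u - v)]
    exact cos_le_cos_of_nonneg_of_le_pi (abs_nonneg _) hqp
      (abs_le.2 ⟨by linarith, by linarith⟩)
  rw [product_to_sum, product_to_sum, huv, ← cos_neg (p - q), neg_sub]
  linarith

theorem cot_add_cot_le_of_add_eq {p q u v : ℝ} (hp : 0 < p) (hpu : p ≤ u) (hpv : p ≤ v)
    (huv : u + v = p + q) (hpq : p + q < π) :
    cot u + cot v ≤ cot p + cot q := by
  have hsin : ∀ t, 0 < t → t < π → sin t ≠ 0 := fun t h₀ h => (sin_pos_of_pos_of_lt_pi h₀ h).ne'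
  rw [cot_add_cot (hsin u (by linarith) (by linarith)) (hsin v (by linarith) (by linarith)),
    cot_add_cot (hsin p hp (by linarith)) (hsin q (by linarith) (by linarith)), huv]
  exact div_le_div_of_nonneg_left (sin_pos_of_pos_of_lt_pi (by linarith) hpq).le
    (mul_pos (sin_pos_of_pos_of_lt_pi hp (by linarith))
      (sin_pos_of_pos_of_lt_pi (by linarith) (by linarith)))
    (sin_mul_sin_le_of_add_eq hpu hpv huv (by linarith))

theorem Int.add_eq_or_add_eq_add_of_modEq {d a b s : ℤ} (ha : a ∈ Set.Ico 0 d)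
    (hb : b ∈ Set.Ico 0 d) (hs : s ∈ Set.Ico 0 d) (hab : a + b ≡ s [ZMOD d]) :
    a + b = s ∨ a + b = s + d := by
  obtain ⟨ha₀, ha⟩ := ha
  obtain ⟨hb₀, hb⟩ := hb
  obtain ⟨hs₀, hs⟩ := hs
  unfold Int.ModEq at hab
  rw [Int.emod_eq_of_lt hs₀ hs] at hab
  by_cases hlt : a + b < d
  · rw [Int.emod_eq_of_lt (by omega) hlt] at hab
    exact Or.inl hab
  · rw [← Int.sub_emod_right, Int.emod_eq_of_lt (by omega) (by omega)] at hab
    exact Or.inr (by omega)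

theorem cot_add_cot_le_of_modEq {d : ℤ} {c : ℝ} (hc₀ : 0 < c) (hc : c < 1 / 2) {a b s : ℤ}
    (ha : a ∈ Set.Ico 0 d) (hb : b ∈ Set.Ico 0 d) (hs : s ∈ Set.Ico 0 d)
    (hab : a + b ≡ s [ZMOD d]) :
    cot (π * (a + c) / d) + cot (π * (b + c) / d) ≤
      cot (π * (0 + c) / d) + cot (π * (s + c) / d) := by
  have hd : (0 : ℝ) < d := by exact_mod_cast ha.1.trans_lt ha.2
  have angle_pos : ∀ k : ℤ, k ∈ Set.Ico 0 d → 0 < π * (k + c) / d := fun k hk => by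
    have : (0 : ℝ) ≤ k := by exact_mod_cast hk.1
    positivity
  have angle_lt : ∀ k : ℤ, k ∈ Set.Ico 0 d → π * (k + c) / d < π := fun k hk => by
    have : (k : ℝ) + 1 ≤ d := by exact_mod_cast hk.2
    rw [div_lt_iff₀ hd]
    nlinarith [pi_pos]
  have hps : π * (0 + c) / d + π * (s + c) / d < π := by
    have : (s : ℝ) + 1 ≤ d := by exact_mod_cast hs.2
    rw [← add_div, div_lt_iff₀ hd]
    nlinarith [pi_pos]
  rcases Int.add_eq_or_add_eq_add_of_modEq ha hb hs hab with h | h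
  · have h : (a : ℝ) + b = s := by exact_mod_cast h
    have ha₀ : (0 : ℝ) ≤ a := by exact_mod_cast ha.1
    have hb₀ : (0 : ℝ) ≤ b := by exact_mod_cast hb.1
    refine cot_add_cot_le_of_add_eq (by positivity) ?_ ?_ ?_ hps
    · gcongr
    · gcongr
    · rw [← add_div, ← add_div, ← h]
      ring
  · have h : (a : ℝ) + b = s + d := by exact_mod_cast h
    have hs₀ : (0 : ℤ) ∈ Set.Ico 0 d := ⟨le_rfl, ha.1.trans_lt ha.2⟩
    have hsum : π < π * (a + c) / d + π * (b + c) / d := by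
      have : (0 : ℝ) ≤ s := by exact_mod_cast hs.1
      rw [← add_div, lt_div_iff₀ hd]
      nlinarith [pi_pos]
    have := cot_add_cot_neg (angle_pos a ha) (angle_lt a ha) (angle_pos b hb) (angle_lt b hb) hsum
    have := cot_add_cot_pos (by simpa using angle_pos 0 hs₀) (angle_pos s hs) hps
    linarith

theorem h_max_general (m d : ℤ) (hm : 2 ≤ m) (hd : 2 ≤ d)
    (α : ℤ → ℝ)
    (hα : ∀ k : ℤ, α k = Real.cot (π * (((k % d : ℤ) : ℝ) + 1 / (2 * (m : ℝ))) / (d : ℝ)))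
    (hne : (Finset.Icc (0 : ℤ) (d - 1)).Nonempty)
    (x : ℤ) :
    (Finset.Icc (0 : ℤ) (d - 1)).sup' hne (fun y => α y + α (-1 - x - y)) =
      α 0 + α (d - 1 - x) := by
  have hd₀ : 0 < d := by omega
  have hm' : (2 : ℝ) ≤ m := by exact_mod_cast hm
  have hc₀ : 0 < 1 / (2 * (m : ℝ)) := by positivity
  have hc : 1 / (2 * (m : ℝ)) < 1 / 2 := by gcongr; linarith
  have mem_Ico : ∀ k, k % d ∈ Set.Ico 0 d := fun k =>
    ⟨Int.emod_nonneg k hd₀.ne', Int.emod_lt_of_pos k hd₀⟩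
  have hwrap : -1 - x ≡ d - 1 - x [ZMOD d] := Int.modEq_iff_dvd.2 ⟨1, by ring⟩
  refine le_antisymm (Finset.sup'_le _ _ fun y _ => ?_)
    (Finset.le_sup'_of_le _ (Finset.mem_Icc.2 ⟨le_rfl, by omega⟩) ?_)
  · have hab : y % d + (-1 - x - y) % d ≡ (d - 1 - x) % d [ZMOD d] :=
      ((Int.mod_modEq y d).add (Int.mod_modEq _ d)).trans <| by
        rw [add_sub_cancel]
        exact hwrap.trans (Int.mod_modEq _ d).symm
    rw [hα, hα, hα, hα, Int.zero_emod, Int.cast_zero]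
    exact cot_add_cot_le_of_modEq hc₀ hc (mem_Ico _) (mem_Ico _) (mem_Ico _) hab
  · rw [sub_zero, hα (-1 - x), hα (d - 1 - x), hwrap]

theorem h_max (m d : ℤ) (hm : 2 ≤ m) (hd : 2 ≤ d)
    (α : ℤ → ℝ)
    (hα : ∀ k : ℤ, α k = Real.cot (π * (((k % d : ℤ) : ℝ) + 1 / (2 * (m : ℝ))) / (d : ℝ)))
    (hne : (Finset.Icc (0 : ℤ) (d - 1)).Nonempty)
    (x : ℤ) (hx : x ∈ Finset.Icc (0 : ℤ) (d - 1)) :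
    (Finset.Icc (0 : ℤ) (d - 1)).sup' hne (fun y => α y + α (-1 - x - y)) =
      α 0 + α (d - 1 - x) :=
  h_max_general m d hm hd α hα hne x
end

section
/- Let m ≥ 2 and d ≥ 2 be integers and α̂_k = cot(π(k + 1/(2m))/d) for integers 0 ≤ k < d. Then the maximum over all (q₁,...,q_{2m-1}) ∈ {0,...,d-1}^{2m-1} of the sum ∑_{i=1}^{2m-1} α̂_{q_i} + α̂_{(-1 - ∑_{i=1}^{2m-1} q_i) mod d} equals (2m - 1)·α̂_0 + α̂_{d-1}. -/
/-!
Put `f k = cot (π (k + s) / d)` with `s = 1 / (2m)` for `0 ≤ k ≤ d - 1`. All these angles lie in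
`(0, π)`, so `f` is decreasing, and `f a + f b ≤ f 0 + f (a + b)` whenever `a + b ≤ d - 1`: writing
`cot x - cot (x + β) = sin β / (sin x sin (x + β))`, this says that `sin x sin (x + β)` grows with
`x`, which follows from `sin y sin (y + β) - sin x sin (x + β) = sin (y - x) sin (x + y + β)`.
With monotonicity this becomes `f a + f b ≤ f 0 + f (min (a + b) (d - 1))`, and folding it over
the indices `q₁, …, q_{2m-1}` and the last index `r` gives the bound, because `∑ qᵢ + r ≥ d - 1`:
that sum is nonnegative and `≡ -1 (mod d)`. The bound is attained at `q = 0`.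
-/

open Real Finset

namespace Real

lemma cot_sub_cot {x y : ℝ} (hx : sin x ≠ 0) (hy : sin y ≠ 0) :
    cot x - cot y = sin (y - x) / (sin x * sin y) := by
  rw [cot_eq_cos_div_sin, cot_eq_cos_div_sin, sin_sub]
  field_simp

lemma cot_le_cot {x y : ℝ} (hx : 0 < x) (hxy : x ≤ y) (hy : y < π) : cot y ≤ cot x := by
  have hsx : 0 < sin x := sin_pos_of_pos_of_lt_pi hx (by linarith)
  have hsy : 0 < sin y := sin_pos_of_pos_of_lt_pi (by linarith) hy
  have h := cot_sub_cot hsx.ne' hsy.ne'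
  have : 0 ≤ sin (y - x) := sin_nonneg_of_nonneg_of_le_pi (by linarith) (by linarith)
  have : 0 ≤ sin (y - x) / (sin x * sin y) := by positivity
  linarith

lemma sin_mul_sin_add_sub_sin_mul_sin_add (x y β : ℝ) :
    sin y * sin (y + β) - sin x * sin (x + β) = sin (y - x) * sin (x + y + β) := by
  simp only [sin_add, sin_sub, cos_add]
  linear_combination (-(sin y * (sin y * cos β + cos y * sin β))) * sin_sq_add_cos_sq x
    + (sin x * (sin x * cos β + cos x * sin β)) * sin_sq_add_cos_sq y

lemma sin_mul_sin_add_le {x y β : ℝ} (hx : 0 ≤ x) (hxy : x ≤ y) (hβ : 0 ≤ β)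
    (h : x + y + β ≤ π) : sin x * sin (x + β) ≤ sin y * sin (y + β) := by
  have h₁ : 0 ≤ sin (y - x) := sin_nonneg_of_nonneg_of_le_pi (by linarith) (by linarith)
  have h₂ : 0 ≤ sin (x + y + β) := sin_nonneg_of_nonneg_of_le_pi (by linarith) h
  nlinarith [sin_mul_sin_add_sub_sin_mul_sin_add x y β, mul_nonneg h₁ h₂]

lemma cot_add_cot_add_le {x y β : ℝ} (hx : 0 < x) (hxy : x ≤ y) (hβ : 0 ≤ β)
    (h : x + y + β ≤ π) : cot y + cot (x + β) ≤ cot x + cot (y + β) := by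
  have hsin {z : ℝ} (hz : 0 < z) (hz' : z ≤ y + β) : 0 < sin z :=
    sin_pos_of_pos_of_lt_pi hz (by linarith)
  have hx' := hsin hx (by linarith)
  have hy' := hsin (z := y) (by linarith) (by linarith)
  have hxβ := hsin (z := x + β) (by linarith) (by linarith)
  have hyβ := hsin (z := y + β) (by linarith) le_rfl
  have hβ' : 0 ≤ sin β := sin_nonneg_of_nonneg_of_le_pi hβ (by linarith)
  have key : sin β / (sin y * sin (y + β)) ≤ sin β / (sin x * sin (x + β)) :=
    div_le_div_of_nonneg_left hβ' (by positivity) (sin_mul_sin_add_le hx.le hxy hβ h)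
  have ex := cot_sub_cot hx'.ne' hxβ.ne'
  have ey := cot_sub_cot hy'.ne' hyβ.ne'
  rw [add_sub_cancel_left] at ex ey
  linarith

end Real

section TruncatedSuperadditivity

variable {D : ℤ} {f : ℤ → ℝ}

lemma add_le_add_min_of_superadditive (hf : AntitoneOn f (Set.Icc 0 (D - 1)))
    (hsup : ∀ a b, 0 ≤ a → 0 ≤ b → a + b ≤ D - 1 → f a + f b ≤ f 0 + f (a + b))
    {a b : ℤ} (ha : a ∈ Set.Icc 0 (D - 1)) (hb : b ∈ Set.Icc 0 (D - 1)) :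
    f a + f b ≤ f 0 + f (min (a + b) (D - 1)) := by
  obtain ⟨ha₀, ha₁⟩ := ha
  obtain ⟨hb₀, hb₁⟩ := hb
  rcases le_total (a + b) (D - 1) with hab | hab
  · rw [min_eq_left hab]
    exact hsup a b ha₀ hb₀ hab
  · rw [min_eq_right hab]
    have hb' : f b ≤ f (D - 1 - a) := hf ⟨by omega, by omega⟩ ⟨hb₀, hb₁⟩ (by omega)
    have := hsup a (D - 1 - a) ha₀ (by omega) (by omega)
    rw [add_sub_cancel] at this
    linarith

lemma sum_add_le_card_mul_add_min {ι : Type*} (hD : 0 < D)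
    (hf : AntitoneOn f (Set.Icc 0 (D - 1)))
    (hsup : ∀ a b, 0 ≤ a → 0 ≤ b → a + b ≤ D - 1 → f a + f b ≤ f 0 + f (a + b))
    (s : Finset ι) (q : ι → ℤ) (hq : ∀ i ∈ s, q i ∈ Set.Icc 0 (D - 1)) :
    ∑ i ∈ s, f (q i) + f 0 ≤ #s * f 0 + f (min (∑ i ∈ s, q i) (D - 1)) := by
  classical
  induction s using Finset.induction_on with
  | empty => simp [min_eq_left (by omega : (0 : ℤ) ≤ D - 1)]
  | insert j s hj ih =>
    rw [sum_insert hj, sum_insert hj, card_insert_of_notMem hj]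
    have hs := ih fun i hi ↦ hq i (mem_insert_of_mem hi)
    obtain ⟨hj₀, hj₁⟩ := hq j (mem_insert_self j s)
    have hS : 0 ≤ ∑ i ∈ s, q i := sum_nonneg fun i hi ↦ (hq i (mem_insert_of_mem hi)).1
    have := add_le_add_min_of_superadditive hf hsup (a := q j)
      (b := min (∑ i ∈ s, q i) (D - 1)) ⟨hj₀, hj₁⟩ ⟨by omega, by omega⟩
    rw [show min (q j + min (∑ i ∈ s, q i) (D - 1)) (D - 1) = min (q j + ∑ i ∈ s, q i) (D - 1)
      by omega] at this
    push_cast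
    linarith

lemma sum_add_le_of_le_sum_add {ι : Type*} (hf : AntitoneOn f (Set.Icc 0 (D - 1)))
    (hsup : ∀ a b, 0 ≤ a → 0 ≤ b → a + b ≤ D - 1 → f a + f b ≤ f 0 + f (a + b))
    (s : Finset ι) (q : ι → ℤ) (hq : ∀ i ∈ s, q i ∈ Set.Icc 0 (D - 1)) {r : ℤ}
    (hr : r ∈ Set.Icc 0 (D - 1)) (hsum : D - 1 ≤ ∑ i ∈ s, q i + r) :
    ∑ i ∈ s, f (q i) + f r ≤ #s * f 0 + f (D - 1) := by
  obtain ⟨hr₀, hr₁⟩ := hr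
  have hD : 0 < D := by omega
  have hS : 0 ≤ ∑ i ∈ s, q i := sum_nonneg fun i hi ↦ (hq i hi).1
  have h₁ := sum_add_le_card_mul_add_min hD hf hsup s q hq
  have h₂ := add_le_add_min_of_superadditive hf hsup
    (a := min (∑ i ∈ s, q i) (D - 1)) ⟨by omega, by omega⟩ ⟨hr₀, hr₁⟩
  rw [show min (min (∑ i ∈ s, q i) (D - 1) + r) (D - 1) = D - 1 by omega] at h₂
  linarith

end TruncatedSuperadditivity

lemma Int.sub_one_le_add_emod_neg_one_sub {D S : ℤ} (hD : 0 < D) (hS : 0 ≤ S) :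
    D - 1 ≤ S + (-1 - S) % D := by
  have hdiv := Int.emod_add_mul_ediv (-1 - S) D
  have hneg : (-1 - S) / D < 0 := Int.ediv_neg_of_neg_of_pos (by omega) hD
  nlinarith

noncomputable def alphaHat (d : ℕ) (s : ℝ) (k : ℤ) : ℝ :=
  cot (π * ((k % (d : ℤ) : ℤ) + s) / d)

section alphaHat

variable {d : ℕ} {s : ℝ}

lemma alphaHat_emod (k : ℤ) : alphaHat d s (k % d) = alphaHat d s k := by
  simp only [alphaHat, Int.emod_emod_of_dvd _ dvd_rfl]

lemma alphaHat_of_mem {k : ℤ} (hk : k ∈ Set.Icc 0 ((d : ℤ) - 1)) :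
    alphaHat d s k = cot (π * (k + s) / d) := by
  rw [alphaHat, Int.emod_eq_of_lt hk.1 (by linarith [hk.2])]

lemma antitoneOn_alphaHat (hs₀ : 0 < s) (hs₁ : s < 1) :
    AntitoneOn (alphaHat d s) (Set.Icc 0 ((d : ℤ) - 1)) := by
  rintro a ⟨ha₀, ha₁⟩ b ⟨hb₀, hb₁⟩ hab
  have hd : (0 : ℝ) < d := by exact_mod_cast (show 0 < (d : ℤ) by omega)
  have hb' : (b : ℝ) + 1 ≤ d := by exact_mod_cast (show b + 1 ≤ (d : ℤ) by omega)
  have ha' : (0 : ℝ) ≤ a := by exact_mod_cast ha₀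
  have hab' : (a : ℝ) ≤ b := by exact_mod_cast hab
  rw [alphaHat_of_mem ⟨ha₀, ha₁⟩, alphaHat_of_mem ⟨hb₀, hb₁⟩]
  apply cot_le_cot (by positivity) (by gcongr)
  rw [div_lt_iff₀ hd]
  nlinarith [pi_pos]

lemma alphaHat_add_alphaHat_le (hs₀ : 0 < s) (hs₁ : 2 * s ≤ 1) {a b : ℤ} (ha : 0 ≤ a)
    (hb : 0 ≤ b) (hab : a + b ≤ d - 1) :
    alphaHat d s a + alphaHat d s b ≤ alphaHat d s 0 + alphaHat d s (a + b) := by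
  have hd : (0 : ℝ) < d := by exact_mod_cast (show 0 < (d : ℤ) by omega)
  have hab' : (a : ℝ) + b + 1 ≤ d := by exact_mod_cast (show a + b + 1 ≤ (d : ℤ) by omega)
  have ha' : (0 : ℝ) ≤ a := by exact_mod_cast ha
  have hb' : (0 : ℝ) ≤ b := by exact_mod_cast hb
  rw [alphaHat_of_mem ⟨ha, by omega⟩, alphaHat_of_mem ⟨hb, by omega⟩,
    alphaHat_of_mem ⟨le_rfl, by omega⟩, alphaHat_of_mem ⟨by omega, hab⟩]
  have key := cot_add_cot_add_le (x := π * s / d) (y := π * (a + s) / d) (β := π * b / d)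
    (by positivity) (by gcongr; linarith) (by positivity)
    (by rw [← add_div, ← add_div, div_le_iff₀ hd]; nlinarith [pi_pos])
  convert key using 3 <;> push_cast <;> ring

end alphaHat

theorem classical_bound (m d : ℕ) (hm : 2 ≤ m) (hd : 2 ≤ d)
    (α : ℤ → ℝ)
    (hα : ∀ k : ℤ, α k = Real.cot (π * (((k % (d : ℤ) : ℤ) : ℝ) + 1 / (2 * (m : ℝ))) / (d : ℝ))) :
    IsGreatest
      {v : ℝ | ∃ q : Fin (2 * m - 1) → ℤ,
        (∀ i, q i ∈ Finset.Icc (0 : ℤ) ((d : ℤ) - 1)) ∧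
        v = (∑ i, α (q i)) + α (-1 - ∑ i, q i)}
      ((2 * (m : ℝ) - 1) * α 0 + α ((d : ℤ) - 1)) := by
  obtain rfl : α = alphaHat d (1 / (2 * m)) := funext hα
  have hs₀ : (0 : ℝ) < 1 / (2 * m) := by positivity
  have hs₁ : 2 * (1 / (2 * m : ℝ)) ≤ 1 := by
    rw [mul_one_div, div_le_one (by positivity)]
    exact_mod_cast (show 2 * 1 ≤ 2 * m by omega)
  have hcard : ((2 * m - 1 : ℕ) : ℝ) = 2 * m - 1 := by
    rw [Nat.cast_sub (by omega)]; push_cast; ring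
  have hd₀ : (0 : ℤ) < d := by omega
  constructor
  · refine ⟨0, fun i ↦ by simp only [Pi.zero_apply, mem_Icc]; omega, ?_⟩
    have hneg : (-1 : ℤ) % d = d - 1 := by
      rw [← Int.add_mul_emod_self_right (-1) 1 d, Int.emod_eq_of_lt (by omega) (by omega)]
      ring
    rw [← alphaHat_emod (-1 - _)]
    simp [hcard, hneg]
  · rintro v ⟨q, hq, rfl⟩
    rw [← alphaHat_emod (-1 - _)]
    have hq' : ∀ i ∈ univ, q i ∈ Set.Icc 0 ((d : ℤ) - 1) := fun i _ ↦ by simpa using hq i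
    have hS : 0 ≤ ∑ i, q i := sum_nonneg fun i _ ↦ (hq' i (mem_univ i)).1
    have := sum_add_le_of_le_sum_add (antitoneOn_alphaHat hs₀ (by linarith))
      (fun a b ↦ alphaHat_add_alphaHat_le hs₀ hs₁) univ q hq'
      ⟨Int.emod_nonneg _ hd₀.ne', by linarith [Int.emod_lt_of_pos (-1 - ∑ i, q i) hd₀]⟩
      (Int.sub_one_le_add_emod_neg_one_sub hd₀ hS)
    simpa [hcard] using this
end

section
/- For all integers m ≥ 2 and d ≥ 2, tan(π/(2m))·cot(π/(2dm)) > d. -/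
/-!
Put `x = π / (2 d m)`, so that `d x = π / (2 m) < π / 2` because `m ≥ 2`. The claim is then
`d tan x < tan (d x)`. On `(0, π / 2)` the tangent is strictly superadditive, since
`tan x + tan y = sin (x + y) / (cos x cos y)` and `cos (x + y) = cos x cos y - sin x sin y`;
induction on `d ≥ 2` gives the claim.
-/

open Real

namespace Real

theorem tan_add_tan_lt_tan_add {x y : ℝ} (hx : 0 < x) (hy : 0 < y) (hxy : x + y < π / 2) :
    tan x + tan y < tan (x + y) := by
  have hcos_x : 0 < cos x := cos_pos_of_mem_Ioo ⟨by linarith, by linarith⟩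
  have hcos_y : 0 < cos y := cos_pos_of_mem_Ioo ⟨by linarith, by linarith⟩
  have hcos_xy : 0 < cos (x + y) := cos_pos_of_mem_Ioo ⟨by linarith, hxy⟩
  have hsin_xy : 0 < sin (x + y) := sin_pos_of_pos_of_lt_pi (by linarith) (by linarith)
  have hcos_lt : cos (x + y) < cos x * cos y := by
    rw [cos_add]
    exact sub_lt_self _ <| mul_pos (sin_pos_of_pos_of_lt_pi hx (by linarith))
      (sin_pos_of_pos_of_lt_pi hy (by linarith))
  calc tan x + tan y = sin (x + y) / (cos x * cos y) := by
        rw [tan_eq_sin_div_cos, tan_eq_sin_div_cos, sin_add]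
        field_simp
    _ < sin (x + y) / cos (x + y) := div_lt_div_of_pos_left hsin_xy hcos_xy hcos_lt
    _ = tan (x + y) := (tan_eq_sin_div_cos _).symm

theorem nat_mul_tan_lt_tan_nat_mul {n : ℕ} (hn : 2 ≤ n) {x : ℝ} (hx : 0 < x)
    (hnx : n * x < π / 2) : n * tan x < tan (n * x) := by
  induction n, hn using Nat.le_induction with
  | base => simpa [two_mul] using tan_add_tan_lt_tan_add hx hx (by simpa [two_mul] using hnx)
  | succ n hn ih =>
    push_cast at hnx ⊢
    have hn_pos : (0 : ℝ) < n := by positivity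
    calc (n + 1) * tan x = n * tan x + tan x := by ring
      _ < tan (n * x) + tan x := by linarith [ih (by nlinarith)]
      _ < tan (n * x + x) := tan_add_tan_lt_tan_add (by positivity) hx (by linarith)
      _ = tan ((n + 1) * x) := by ring_nf

end Real

theorem ns_gt_quantum (m d : ℕ) (hm : 2 ≤ m) (hd : 2 ≤ d) :
    Real.tan (π / (2 * (m : ℝ))) * Real.cot (π / (2 * (d : ℝ) * (m : ℝ))) > (d : ℝ) := by
  have hm' : (2 : ℝ) ≤ m := by exact_mod_cast hm
  have hd' : (2 : ℝ) ≤ d := by exact_mod_cast hd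
  set x := π / (2 * (d : ℝ) * m) with hx_def
  have hx : 0 < x := by positivity
  have hdx : (d : ℝ) * x = π / (2 * m) := by
    rw [hx_def]
    field_simp
  have hdx_lt : (d : ℝ) * x < π / 2 := by
    rw [hdx]
    exact div_lt_div_of_pos_left pi_pos two_pos (by linarith)
  have htan_x : 0 < tan x := tan_pos_of_pos_of_lt_pi_div_two hx (by nlinarith)
  rw [← hdx, cot_eq_cos_div_sin, ← inv_div, ← tan_eq_sin_div_cos, gt_iff_lt,
    ← div_eq_mul_inv, lt_div_iff₀ htan_x]
  exact nat_mul_tan_lt_tan_nat_mul hd hx hdx_lt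
end

section
/- For all real a with 0 < a ≤ 1/2 and real x with 0 < x ≤ π/4, one has a·(x − π)·cot(a·x) + π·cot(x) > 0. -/
/-!
Since `tan t > t`, we have `cot (a x) < 1 / (a x)`, and as `x - π < 0` the first term exceeds
`(x - π) / x`. For the second term, `x cot x ≥ 1 - 2 x² / 5` on `(0, 1]`. Together the sum is more
than `1 - 2 π x / 5 ≥ 1 - π² / 10 > 0`.
-/

open Real

theorem Real.one_sub_two_fifths_mul_sq_le_mul_cot {x : ℝ} (hx : 0 < x) (hx₁ : x ≤ 1) :
    1 - 2 / 5 * x ^ 2 ≤ x * cot x := by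
  let f (t : ℝ) : ℝ := t * cos t - sin t + 2 / 5 * t ^ 2 * sin t
  have hderiv (t : ℝ) : deriv f t = t / 5 * (2 * t * cos t - sin t) := by
    simp (disch := fun_prop) [f]
    ring
  -- `f' ≥ 0` because `sin t ≤ t` and `cos t ≥ 1 - t ^ 2 / 2 ≥ 1 / 2`.
  have hmono : MonotoneOn f (Set.Icc 0 1) := by
    refine monotoneOn_of_deriv_nonneg (convex_Icc 0 1) (by fun_prop) (by fun_prop) fun t ht ↦ ?_
    rw [interior_Icc] at ht
    have hcos : 1 - t ^ 2 / 2 ≤ cos t := one_sub_sq_div_two_le_cos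
    have hsin : sin t ≤ t := sin_le ht.1.le
    have hfactor : 0 ≤ 2 * t * cos t - sin t := by nlinarith [ht.1, ht.2]
    rw [hderiv]
    exact mul_nonneg (by linarith [ht.1]) hfactor
  have hfx : f 0 ≤ f x := hmono (by simp) ⟨hx.le, hx₁⟩ hx.le
  have hsin : 0 < sin x := sin_pos_of_pos_of_lt_pi hx (by linarith [pi_gt_three])
  rw [cot_eq_cos_div_sin, mul_div_assoc', le_div_iff₀ hsin]
  simp only [f, sin_zero, cos_zero] at hfx
  nlinarith

theorem Real.cot_lt_inv {x : ℝ} (hx : 0 < x) (hx' : x < π / 2) : cot x < x⁻¹ := by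
  rw [cot_eq_cos_div_sin, ← inv_div, ← tan_eq_sin_div_cos]
  exact inv_strictAnti₀ hx (lt_tan hx hx')

theorem u_pos (a x : ℝ) (ha : 0 < a) (ha' : a ≤ 1 / 2) (hx : 0 < x) (hx' : x ≤ π / 4) :
    a * (x - π) * Real.cot (a * x) + π * Real.cot x > 0 := by
  have hcot_ax : cot (a * x) < (a * x)⁻¹ := cot_lt_inv (by positivity) (by nlinarith [pi_pos])
  have hcot_x : 1 - 2 / 5 * x ^ 2 ≤ x * cot x :=
    one_sub_two_fifths_mul_sq_le_mul_cot hx (by linarith [pi_lt_d2])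
  have hneg : a * x * (x - π) < 0 :=
    mul_neg_of_pos_of_neg (by positivity) (by linarith [pi_gt_three])
  have hfirst : x - π < x * (a * (x - π) * cot (a * x)) :=
    calc x - π = a * x * (x - π) * (a * x)⁻¹ := by field_simp
      _ < a * x * (x - π) * cot (a * x) := mul_lt_mul_of_neg_left hcot_ax hneg
      _ = x * (a * (x - π) * cot (a * x)) := by ring
  have hsecond : π * (1 - 2 / 5 * x ^ 2) ≤ x * (π * cot x) := by nlinarith [pi_pos]
  have hπx : 2 * π * x < 5 := by nlinarith [pi_lt_d2, pi_pos]
  have hsum : 0 < x * (a * (x - π) * cot (a * x) + π * cot x) := by nlinarith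
  exact pos_of_mul_pos_right hsum hx.le
end

section
/- For all real x with 0 < x ≤ π/4, one has 1 − π/x + π·cot(x) > 0. -/
/-!
The function `cot x - 1 / x` is strictly decreasing on `(0, π)`: its derivative
`1 / x ^ 2 - 1 / sin x ^ 2` is negative because `sin x < x`. Hence for `0 < x ≤ π / 4`,
`cot x - 1 / x ≥ cot (π / 4) - 4 / π = 1 - 4 / π`, and multiplying by `π` gives
`1 - π / x + π cot x ≥ π - 3 > 0`.
-/

open Real Set

namespace Real

theorem hasDerivAt_cot_s11 {x : ℝ} (hx : sin x ≠ 0) : HasDerivAt cot (-1 / sin x ^ 2) x := by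
  rw [show cot = fun t => cos t / sin t from funext cot_eq_cos_div_sin]
  refine ((hasDerivAt_cos x).div (hasDerivAt_sin x) hx).congr_deriv ?_
  rw [← sin_sq_add_cos_sq x]
  ring

theorem cot_pi_div_four : cot (π / 4) = 1 := by
  rw [cot_eq_cos_div_sin, cos_pi_div_four, sin_pi_div_four, div_self]
  positivity

theorem strictAntiOn_cot_sub_inv : StrictAntiOn (fun x => cot x - x⁻¹) (Ioo 0 π) := by
  have hderiv : ∀ x ∈ Ioo 0 π,
      HasDerivAt (fun x => cot x - x⁻¹) (-1 / sin x ^ 2 - -(x ^ 2)⁻¹) x := fun x hx =>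
    (hasDerivAt_cot_s11 (sin_pos_of_pos_of_lt_pi hx.1 hx.2).ne').sub (hasDerivAt_inv hx.1.ne')
  refine strictAntiOn_of_hasDerivWithinAt_neg (convex_Ioo 0 π)
    (fun x hx => (hderiv x hx).continuousAt.continuousWithinAt)
    (fun x hx => (hderiv x (interior_subset hx)).hasDerivWithinAt) fun x hx => ?_
  rw [interior_Ioo] at hx
  have hsin : 0 < sin x := sin_pos_of_pos_of_lt_pi hx.1 hx.2
  have hsq : sin x ^ 2 < x ^ 2 := pow_lt_pow_left₀ (sin_lt hx.1) hsin.le two_ne_zero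
  have hinv := inv_strictAnti₀ (by positivity) hsq
  rw [neg_div, one_div]
  linarith

theorem one_sub_four_div_pi_le_cot_sub_inv {x : ℝ} (hx : 0 < x) (hx' : x ≤ π / 4) :
    1 - 4 / π ≤ cot x - x⁻¹ := by
  have hquarter : π / 4 ∈ Ioo 0 π := ⟨by positivity, by linarith [pi_pos]⟩
  have h := strictAntiOn_cot_sub_inv.antitoneOn ⟨hx, hx'.trans_lt hquarter.2⟩ hquarter hx'
  rwa [cot_pi_div_four, inv_div] at h

end Real

theorem limit_u_pos (x : ℝ) (hx : 0 < x) (hx' : x ≤ π / 4) :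
    1 - π / x + π * Real.cot x > 0 := by
  have hbound := mul_le_mul_of_nonneg_left (one_sub_four_div_pi_le_cot_sub_inv hx hx') pi_pos.le
  have hexpand : π * (cot x - x⁻¹) = π * cot x - π / x := by ring
  have hfour : π * (1 - 4 / π) = π - 4 := by field_simp
  linarith [pi_gt_three]
end

section
/- For all integers m ≥ 2 and d ≥ 2, 2md·cot(π/(2m)) − 2m·cot(π/(2dm)) + cot(π/(2dm)) + cot((π/d)(1 − 1/(2m))) > 0. -/
/-!
With `a = π / (2m)` and `b = π / (2dm)` the left-hand side is
`2md · cot a - (2m - 1) · cot b + cot c` with `0 < c < π / 2`, so `cot c > 0`.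
Since `cot b < 1 / b = 2dm / π`, it suffices that `cot a > (2m - 1) / π`, i.e. `a cot a > 1 - a / π`.
For `m = 2` this is `1 > 3 / π`; for `m ≥ 3` the angle `a ≤ π / 6` is below `2 / π`, and there
`a cot a ≥ cos a ≥ 1 - a² / 2 > 1 - a / π`.
-/

open Real

namespace Real

lemma cot_eq_inv_tan (x : ℝ) : cot x = (tan x)⁻¹ := by
  rw [← cot_inv_eq_tan, inv_inv]

lemma cot_pos_of_pos_of_lt_pi_div_two {x : ℝ} (h0 : 0 < x) (h1 : x < π / 2) : 0 < cot x := by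
  rw [cot_eq_inv_tan]
  exact inv_pos.2 (tan_pos_of_pos_of_lt_pi_div_two h0 h1)

lemma cot_lt_inv_s13 {x : ℝ} (h0 : 0 < x) (h1 : x < π / 2) : cot x < x⁻¹ := by
  rw [cot_eq_inv_tan]
  exact inv_strictAnti₀ h0 (lt_tan h0 h1)

lemma cos_le_mul_cot {x : ℝ} (h0 : 0 < x) (h1 : x ≤ π / 2) : cos x ≤ x * cot x := by
  have hsin : 0 < sin x := sin_pos_of_pos_of_lt_pi h0 (by linarith [pi_pos])
  have hcos : 0 ≤ cos x := cos_nonneg_of_mem_Icc ⟨by linarith, h1⟩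
  rw [cot_eq_cos_div_sin, ← mul_div_assoc, le_div_iff₀ hsin, mul_comm]
  exact mul_le_mul_of_nonneg_right (sin_le h0.le) hcos

lemma one_sub_div_pi_lt_mul_cot {x : ℝ} (h0 : 0 < x) (h1 : x < 2 / π) :
    1 - x / π < x * cot x := by
  have hπ : 0 < π := pi_pos
  have hx : x ≤ π / 2 := by nlinarith [pi_gt_three, div_mul_cancel₀ (2 : ℝ) hπ.ne']
  have hquad : x ^ 2 / 2 < x / π := by
    rw [div_lt_div_iff₀ two_pos hπ]
    nlinarith [(lt_div_iff₀ hπ).1 h1]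
  calc 1 - x / π < 1 - x ^ 2 / 2 := by linarith
    _ ≤ cos x := one_sub_sq_div_two_le_cos
    _ ≤ x * cot x := cos_le_mul_cot h0 hx

end Real

lemma two_mul_sub_one_div_pi_lt_cot_pi_div_two_mul (m : ℕ) (hm : 2 ≤ m) :
    (2 * m - 1) / π < cot (π / (2 * m)) := by
  have hπ : 0 < π := pi_pos
  obtain rfl | hm3 := hm.eq_or_lt
  · have hcot : cot (π / (2 * (2 : ℕ))) = 1 := by
      rw [cot_eq_inv_tan, show π / (2 * ((2 : ℕ) : ℝ)) = π / 4 by norm_num, tan_pi_div_four,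
        inv_one]
    rw [hcot, div_lt_one hπ]
    norm_num [pi_gt_three]
  · have hM : (3 : ℝ) ≤ m := by exact_mod_cast hm3
    set x := π / (2 * m) with hx
    have hx0 : 0 < x := by positivity
    have hx2 : x < 2 / π := by
      rw [hx, div_lt_div_iff₀ (by positivity) hπ]
      nlinarith [pi_lt_d2]
    have hscale : (2 * m - 1) / π = (1 - x / π) / x := by
      rw [hx]; field_simp
    rw [hscale, div_lt_iff₀' hx0]
    exact one_sub_div_pi_lt_mul_cot hx0 hx2

theorem quantum_gt_classical (m d : ℕ) (hm : 2 ≤ m) (hd : 2 ≤ d) :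
    2 * (m : ℝ) * (d : ℝ) * Real.cot (π / (2 * (m : ℝ))) -
      2 * (m : ℝ) * Real.cot (π / (2 * (d : ℝ) * (m : ℝ))) +
      Real.cot (π / (2 * (d : ℝ) * (m : ℝ))) +
      Real.cot (π / (d : ℝ) * (1 - 1 / (2 * (m : ℝ)))) > 0 := by
  have hπ : 0 < π := pi_pos
  have hM : (2 : ℝ) ≤ m := by exact_mod_cast hm
  have hD : (2 : ℝ) ≤ d := by exact_mod_cast hd
  have hcot_a := two_mul_sub_one_div_pi_lt_cot_pi_div_two_mul m hm
  have hcot_b : cot (π / (2 * d * m)) < 2 * d * m / π := by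
    have hb : π / (2 * d * m) < π / 2 := div_lt_div_of_pos_left hπ two_pos (by nlinarith)
    exact (cot_lt_inv_s13 (by positivity) hb).trans_eq (inv_div _ _)
  have hcot_c : 0 < cot (π / d * (1 - 1 / (2 * m))) := by
    have hfac : (1 / (2 * m) : ℝ) ∈ Set.Ioo 0 1 :=
      ⟨by positivity, (div_lt_one (by positivity)).2 (by linarith)⟩
    refine cot_pos_of_pos_of_lt_pi_div_two (mul_pos (by positivity) (by linarith [hfac.2])) ?_
    calc π / d * (1 - 1 / (2 * m)) < π / d :=
          mul_lt_of_lt_one_right (by positivity) (by linarith [hfac.1])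
      _ ≤ π / 2 := div_le_div_of_nonneg_left hπ.le two_pos hD
  have hbalance : 2 * m * d * ((2 * m - 1) / π) = (2 * m - 1) * (2 * d * m / π) := by ring
  linarith [mul_lt_mul_of_pos_left hcot_a (by positivity : (0 : ℝ) < 2 * m * d),
    mul_lt_mul_of_pos_left hcot_b (by linarith : (0 : ℝ) < 2 * m - 1)]
end

section
/- For all integers m ≥ 2, the limit as d → ∞ of the ratio of quantum to classical bound, namely 2m(d−1) / (tan(π/(2m))·[(2m−1)cot(π/(2dm)) − cot((π/d)(1 − 1/(2m)))] − 2m), equals (2m−1)·π·cot(π/(2m)) / (4m(m−1)). -/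
open Real Filter Topology

/-!
Since `sin x / x → 1`, we have `x * cot (c * x) → 1 / c` as `x → 0`, so `cot (c / d) / d → 1 / c`
as `d → ∞`. Dividing numerator and denominator by `d`, the numerator tends to `2m` and the
denominator to `tan (π / 2m) * ((2m - 1) * 2m / π - 2m / ((2m - 1) π))
= tan (π / 2m) * 8m² (m - 1) / ((2m - 1) π)`, which is nonzero for `m ≥ 2`.
-/

lemma mul_cot_mul_eq_cos_div_sinc {c x : ℝ} (hc : c ≠ 0) (hx : x ≠ 0) :
    x * cot (c * x) = cos (c * x) / (c * sinc (c * x)) := by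
  rw [cot_eq_cos_div_sin, sinc_of_ne_zero (mul_ne_zero hc hx)]
  field_simp

lemma tendsto_mul_cot_mul_nhdsNE {c : ℝ} (hc : c ≠ 0) :
    Tendsto (fun x => x * cot (c * x)) (𝓝[≠] 0) (𝓝 c⁻¹) := by
  have hcont : Tendsto (fun x => cos (c * x) / (c * sinc (c * x))) (𝓝 0)
      (𝓝 (cos (c * 0) / (c * sinc (c * 0)))) := by
    refine ((continuous_cos.comp (continuous_const_mul c)).tendsto 0).div
      ((continuous_const.mul (continuous_sinc.comp (continuous_const_mul c))).tendsto 0) ?_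
    simp [hc]
  rw [mul_zero, cos_zero, sinc_zero, mul_one, one_div] at hcont
  exact (hcont.mono_left nhdsWithin_le_nhds).congr'
    (eventually_nhdsWithin_of_forall fun x hx => (mul_cot_mul_eq_cos_div_sinc hc hx).symm)

lemma tendsto_inv_natCast_mul_cot_div {c : ℝ} (hc : c ≠ 0) :
    Tendsto (fun n : ℕ => (n : ℝ)⁻¹ * cot (c / n)) atTop (𝓝 c⁻¹) := by
  have h : Tendsto (fun n : ℕ => (n : ℝ)⁻¹) atTop (𝓝[≠] 0) :=
    (tendsto_inv_atTop_nhdsGT_zero.comp tendsto_natCast_atTop_atTop).mono_right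
      (nhdsWithin_mono _ fun _ hx => ne_of_gt hx)
  simp_rw [div_eq_mul_inv]
  exact (tendsto_mul_cot_mul_nhdsNE hc).comp h

lemma tendsto_mul_sub_one_div_cot_sub_cot (A T B : ℝ) {c₁ c₂ : ℝ} (hc₁ : c₁ ≠ 0)
    (hc₂ : c₂ ≠ 0) (hL : T * (B * c₁⁻¹ - c₂⁻¹) ≠ 0) :
    Tendsto (fun d : ℕ => A * ((d : ℝ) - 1) / (T * (B * cot (c₁ / d) - cot (c₂ / d)) - A))
      atTop (𝓝 (A / (T * (B * c₁⁻¹ - c₂⁻¹)))) := by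
  have hz : Tendsto (fun d : ℕ => (d : ℝ)⁻¹) atTop (𝓝 0) :=
    tendsto_inv_atTop_zero.comp tendsto_natCast_atTop_atTop
  have hnum : Tendsto (fun d : ℕ => A * (1 - (d : ℝ)⁻¹)) atTop (𝓝 A) := by
    simpa using (tendsto_const_nhds (x := A)).mul ((tendsto_const_nhds (x := (1 : ℝ))).sub hz)
  have hden : Tendsto (fun d : ℕ => T * (B * ((d : ℝ)⁻¹ * cot (c₁ / d)) -
      (d : ℝ)⁻¹ * cot (c₂ / d)) - A * (d : ℝ)⁻¹) atTop (𝓝 (T * (B * c₁⁻¹ - c₂⁻¹))) := by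
    simpa using (tendsto_const_nhds.mul ((tendsto_const_nhds.mul
      (tendsto_inv_natCast_mul_cot_div hc₁)).sub (tendsto_inv_natCast_mul_cot_div hc₂))).sub
      (tendsto_const_nhds.mul hz)
  refine (hnum.div hden hL).congr' ?_
  filter_upwards [eventually_ne_atTop 0] with d hd
  have hd' : (d : ℝ) ≠ 0 := Nat.cast_ne_zero.mpr hd
  rw [Pi.div_apply, ← mul_div_mul_left _ _ hd']
  congr 1 <;> field_simp

theorem ratio_QC_limit (m : ℕ) (hm : 2 ≤ m) :
    Filter.Tendsto (fun d : ℕ =>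
        (2 * (m : ℝ) * ((d : ℝ) - 1)) /
          (Real.tan (π / (2 * (m : ℝ))) *
            ((2 * (m : ℝ) - 1) * Real.cot (π / (2 * (d : ℝ) * (m : ℝ))) -
              Real.cot (π / (d : ℝ) * (1 - 1 / (2 * (m : ℝ))))) - 2 * (m : ℝ)))
      Filter.atTop
      (nhds ((2 * (m : ℝ) - 1) * π * Real.cot (π / (2 * (m : ℝ))) /
        (4 * (m : ℝ) * ((m : ℝ) - 1)))) := by
  have hm' : (2 : ℝ) ≤ m := by exact_mod_cast hm
  have hm₁ : (0 : ℝ) < m - 1 := by linarith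
  have hm₂ : (0 : ℝ) < 2 * m - 1 := by linarith
  set t := π / (2 * (m : ℝ)) with ht
  have ht_pos : 0 < t := by positivity
  have ht_lt : t < π / 2 := by
    rw [ht]; exact div_lt_div_of_pos_left pi_pos two_pos (by linarith)
  have htan : tan t ≠ 0 := (tan_pos_of_pos_of_lt_pi_div_two ht_pos ht_lt).ne'
  have hc₂ : π * (1 - 1 / (2 * (m : ℝ))) ≠ 0 := by
    have : 1 / (2 * (m : ℝ)) < 1 := by rw [div_lt_one] <;> linarith
    exact mul_ne_zero pi_ne_zero (by linarith)
  have hcoef : (2 * (m : ℝ) - 1) * t⁻¹ - (π * (1 - 1 / (2 * m)))⁻¹ =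
      8 * (m : ℝ) ^ 2 * (m - 1) / ((2 * m - 1) * π) := by
    rw [ht]; field_simp; ring
  have hL : tan t * ((2 * (m : ℝ) - 1) * t⁻¹ - (π * (1 - 1 / (2 * m)))⁻¹) ≠ 0 := by
    rw [hcoef]; exact mul_ne_zero htan (by positivity)
  convert tendsto_mul_sub_one_div_cot_sub_cot (2 * (m : ℝ)) (tan t) (2 * (m : ℝ) - 1)
    ht_pos.ne' hc₂ hL using 2
  · rw [show ∀ d : ℝ, π / (2 * d * m) = t / d from fun d => by rw [ht]; ring,
      show ∀ d : ℝ, π / d * (1 - 1 / (2 * m)) = π * (1 - 1 / (2 * m)) / d from fun d => by ring]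
  · rw [hcoef, ← tan_inv_eq_cot]
    field_simp
    ring
end

section
/- Let m ≥ 2 and d ≥ 2 be odd integers (d odd), ω = exp(2πi/d), a_l = ω^{(2l−d)/(4m)}/(2cos(π/(2m))) for l ∈ {1,...,(d−1)/2}, c_l = a_l and c_{−l} = conj(a_l), I = {−(d−1)/2,...,−1,1,...,(d−1)/2}. Then for each integer n with 0 ≤ n ≤ (d−1)/2 − 1 (or n = ⌊d/2⌋), ∑_{l∈I} c_l·ω^{nl} = (1/2)·(tan(π/(2m))·cot((π/d)(n + 1/(2m))) − 1). -/
/-!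
Pairing `l` with `-l`, and writing `θ = π / (2m)`, `α = (π / d) (n + 1 / (2m))`, each pair
contributes `2 Re (a_l ω^{nl}) = cos (2lα - θ) / cos θ`. After multiplication by `2 sin α` the sum
over `l = 1, …, (d - 1) / 2` telescopes to `sin (dα - θ) - sin (α - θ)`, and `dα - θ = nπ`.
-/

open Real Finset

theorem sum_erase_zero_Icc_neg_eq_sum_range {M : Type*} [AddCommMonoid M] (f : ℤ → M) (k : ℕ) :
    ∑ l ∈ (Icc (-(k : ℤ)) k).erase 0, f l = ∑ i ∈ range k, (f (i + 1) + f (-(i + 1))) := by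
  induction k with
  | zero => simp
  | succ k ih =>
    have hIcc : (Icc (-((k + 1 : ℕ) : ℤ)) (k + 1 : ℕ)).erase 0 =
        insert ((k : ℤ) + 1) (insert (-((k : ℤ) + 1)) ((Icc (-(k : ℤ)) k).erase 0)) := by
      ext; simp; omega
    rw [hIcc, sum_insert (by simp; omega), sum_insert (by simp), sum_range_succ, ih]
    abel

theorem sum_range_cos_mul_two_sin (α θ : ℝ) (k : ℕ) :
    (∑ i ∈ range k, cos (2 * (i + 1) * α - θ)) * (2 * sin α) =
      sin ((2 * k + 1) * α - θ) - sin (α - θ) := by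
  have product_to_sum (i : ℕ) : cos (2 * (i + 1) * α - θ) * (2 * sin α) =
      sin ((2 * ((i + 1 : ℕ) : ℝ) + 1) * α - θ) - sin ((2 * (i : ℝ) + 1) * α - θ) := by
    rw [sin_sub_sin]; push_cast; ring_nf
  rw [sum_mul, sum_congr rfl fun i _ => product_to_sum i,
    sum_range_sub (fun i : ℕ => sin ((2 * (i : ℝ) + 1) * α - θ))]
  simp

theorem sum_range_cos_sub_div_cos (α θ : ℝ) (k : ℕ) (hk : sin ((2 * k + 1) * α - θ) = 0)
    (hα : sin α ≠ 0) (hθ : cos θ ≠ 0) :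
    ∑ i ∈ range k, cos (2 * (i + 1) * α - θ) / cos θ = 1 / 2 * (tan θ * cot α - 1) := by
  have h := sum_range_cos_mul_two_sin α θ k
  rw [hk, zero_sub, sin_sub] at h
  rw [← sum_div, tan_eq_sin_div_cos, cot_eq_cos_div_sin]
  field_simp
  linear_combination h

theorem exp_div_mul_zpow_add_conj (x y c : ℝ) (j : ℤ) :
    Complex.exp (x * Complex.I) / c * Complex.exp (y * Complex.I) ^ j +
        starRingEnd ℂ (Complex.exp (x * Complex.I) / c) * Complex.exp (y * Complex.I) ^ (-j) =
      ((2 * cos (x + j * y) / c : ℝ) : ℂ) := by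
  have hconj : Complex.exp (y * Complex.I) ^ (-j) =
      starRingEnd ℂ (Complex.exp (y * Complex.I) ^ j) := by
    rw [map_zpow₀, ← Complex.exp_conj, zpow_neg, ← inv_zpow, ← Complex.exp_neg]
    simp
  have hprod : Complex.exp (x * Complex.I) / c * Complex.exp (y * Complex.I) ^ j =
      Complex.exp ((x + j * y : ℝ) * Complex.I) / c := by
    rw [← Complex.exp_int_mul, div_mul_eq_mul_div, ← Complex.exp_add]
    push_cast; ring_nf
  rw [hconj, ← map_mul, hprod, Complex.add_conj, Complex.div_ofReal_re,
    Complex.exp_ofReal_mul_I_re]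
  push_cast; ring

theorem cos_pi_div_ne_zero {x : ℝ} (hx : 2 < x) : cos (π / x) ≠ 0 := by
  have hpos : 0 < π / x := div_pos pi_pos (by linarith)
  exact (cos_pos_of_mem_Ioo ⟨by linarith [pi_pos], div_lt_div_of_pos_left pi_pos two_pos hx⟩).ne'

theorem sin_pi_div_mul_ne_zero {d x : ℝ} (hx : 0 < x) (hxd : x < d) : sin (π / d * x) ≠ 0 := by
  have hd : 0 < d := hx.trans hxd
  refine (sin_pos_of_pos_of_lt_pi (by positivity) ?_).ne'
  rw [div_mul_eq_mul_div, div_lt_iff₀ hd]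
  exact mul_lt_mul_of_pos_left hxd pi_pos

theorem c_l_sum_general (m d : ℕ) (hm : 2 ≤ m) (hodd : Odd d)
    (a : ℤ → ℂ)
    (ha : ∀ l : ℤ, a l =
      Complex.exp (2 * (π : ℂ) * Complex.I * ((2 * (l : ℂ) - (d : ℂ)) / (4 * (m : ℂ))) / (d : ℂ)) /
        (2 * (Real.cos (π / (2 * (m : ℝ))) : ℂ)))
    (n : ℕ) (hn : n ≤ (d - 1) / 2) :
    ∑ l ∈ (Finset.Icc (-(((d : ℤ) - 1) / 2)) (((d : ℤ) - 1) / 2)).erase 0,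
      (if 0 < l then a l else (starRingEnd ℂ) (a (-l))) *
        (Complex.exp (2 * (π : ℂ) * Complex.I / (d : ℂ))) ^ ((n : ℤ) * l) =
      (((1 / 2) * (Real.tan (π / (2 * (m : ℝ))) *
        Real.cot (π / (d : ℝ) * ((n : ℝ) + 1 / (2 * (m : ℝ)))) - 1) : ℝ) : ℂ) := by
  obtain ⟨k, rfl⟩ := hodd
  have hmR : (2 : ℝ) ≤ m := by exact_mod_cast hm
  have hnk : (n : ℝ) ≤ k := by exact_mod_cast (by omega : n ≤ k)
  set θ := π / (2 * (m : ℝ)) with hθ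
  set α := π / ((2 * k + 1 : ℕ) : ℝ) * ((n : ℝ) + 1 / (2 * (m : ℝ))) with hα
  have hcos : cos θ ≠ 0 := cos_pi_div_ne_zero (by linarith)
  have hsin : sin α ≠ 0 := by
    have hfrac : 1 / (2 * (m : ℝ)) < 1 := by rw [div_lt_one] <;> linarith
    exact sin_pi_div_mul_ne_zero (by positivity) (by push_cast; linarith)
  have hsin_end : sin ((2 * k + 1) * α - θ) = 0 := by
    rw [show (2 * k + 1) * α - θ = n * π by rw [hα, hθ]; push_cast; field_simp; ring]
    exact sin_nat_mul_pi n
  have hω : Complex.exp (2 * π * Complex.I / ((2 * k + 1 : ℕ) : ℂ)) =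
      Complex.exp ((2 * π / (2 * k + 1) : ℝ) * Complex.I) := by
    push_cast; ring_nf
  have hpair (i : ℕ) :
      (if 0 < (i + 1 : ℤ) then a (i + 1) else starRingEnd ℂ (a (-(i + 1)))) *
          Complex.exp (2 * π * Complex.I / ((2 * k + 1 : ℕ) : ℂ)) ^ ((n : ℤ) * (i + 1)) +
        (if 0 < -(i + 1 : ℤ) then a (-(i + 1)) else starRingEnd ℂ (a (-(-(i + 1))))) *
          Complex.exp (2 * π * Complex.I / ((2 * k + 1 : ℕ) : ℂ)) ^ ((n : ℤ) * -(i + 1)) =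
        ((cos (2 * (i + 1) * α - θ) / cos θ : ℝ) : ℂ) := by
    have hai : a (i + 1) = Complex.exp ((π * (2 * (i + 1) - (2 * k + 1)) /
        (2 * m * (2 * k + 1)) : ℝ) * Complex.I) / ((2 * cos θ : ℝ) : ℂ) := by
      rw [ha]; push_cast; congr 2; field_simp; ring
    rw [if_pos (by omega), if_neg (by omega), neg_neg, hai, hω, mul_neg,
      exp_div_mul_zpow_add_conj, mul_div_mul_left _ _ two_ne_zero]
    congr 3
    rw [hα, hθ]; push_cast; field_simp; ring
  rw [show (((2 * k + 1 : ℕ) : ℤ) - 1) / 2 = k by omega, sum_erase_zero_Icc_neg_eq_sum_range,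
    sum_congr rfl fun i _ => hpair i, ← Complex.ofReal_sum,
    sum_range_cos_sub_div_cos α θ k hsin_end hsin hcos]

theorem c_l_sum (m d : ℕ) (hm : 2 ≤ m) (hd : 2 ≤ d) (hodd : Odd d)
    (a : ℤ → ℂ)
    (ha : ∀ l : ℤ, a l =
      Complex.exp (2 * (π : ℂ) * Complex.I * ((2 * (l : ℂ) - (d : ℂ)) / (4 * (m : ℂ))) / (d : ℂ)) /
        (2 * (Real.cos (π / (2 * (m : ℝ))) : ℂ)))
    (n : ℕ) (hn : n ≤ (d - 1) / 2) :
    ∑ l ∈ (Finset.Icc (-(((d : ℤ) - 1) / 2)) (((d : ℤ) - 1) / 2)).erase 0,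
      (if 0 < l then a l else (starRingEnd ℂ) (a (-l))) *
        (Complex.exp (2 * (π : ℂ) * Complex.I / (d : ℂ))) ^ ((n : ℤ) * l) =
      (((1 / 2) * (Real.tan (π / (2 * (m : ℝ))) *
        Real.cot (π / (d : ℝ) * ((n : ℝ) + 1 / (2 * (m : ℝ)))) - 1) : ℝ) : ℂ) :=
  c_l_sum_general m d hm hodd a ha n hn
end
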